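/- arXiv:2602.23026 — 4 statements merged into one kernel-verified Lean document; each statement's English description precedes it below -/
import Mathlib

section
/- Let 0 ≤ c < 0.5 and let D be a distribution over X × {0,1} that is non-degenerate with respect to groups S_1,...,S_m, capacity 2c, and a family F of functions X → [0,1] that is closed under group post-processing. Then any function f ∈ F that has capacity c and satisfies max-min fairness (i.e., f maximizes min_{i∈[m]} E_{(x,y)∼D}[h(x)y | x ∈ S_i] over functions h ∈ F of capacity c) has equal per-group true positive counts: for all i, j ∈ [m], E_{(x,y)∼D}[f(x)y | x ∈ S_i] = E_{(x,y)∼D}[f(x)y | x ∈ S_j]. -/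
open MeasureTheory Set

noncomputable section

namespace FairAlloc

variable {X : Type*} [MeasurableSpace X]

/-- Real value of a Boolean label `y`. -/
def yv (b : Bool) : ℝ := if b then 1 else 0

/-- `Pr_{(x,y)∼D}[x ∈ S]`. -/
def prIn (D : Measure (X × Bool)) (S : Set X) : ℝ :=
  (D (S ×ˢ (univ : Set Bool))).toReal

/-- `E_{(x,y)∼D}[φ(x,y)]`. -/
def ex (D : Measure (X × Bool)) (φ : X → Bool → ℝ) : ℝ :=
  ∫ z, φ z.1 z.2 ∂D

/-- `E_{(x,y)∼D}[φ(x,y) | x ∈ S]`. -/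
def exCond (D : Measure (X × Bool)) (S : Set X) (φ : X → Bool → ℝ) : ℝ :=
  (∫ z in S ×ˢ (univ : Set Bool), φ z.1 z.2 ∂D) / prIn D S

/-- `f` has capacity `c` under `D`: `E_{(x,y)∼D}[f(x)] = c`. -/
def HasCapacity (D : Measure (X × Bool)) (f : X → ℝ) (c : ℝ) : Prop :=
  ex D (fun x _ => f x) = c

/-- True positive count `E_{(x,y)∼D}[f(x)·y]`. -/
def tpc (D : Measure (X × Bool)) (f : X → ℝ) : ℝ :=
  ex D (fun x b => f x * yv b)

/-- Conditional true positive count `E_{(x,y)∼D}[f(x)·y | x ∈ S]`. -/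
def tpcCond (D : Measure (X × Bool)) (S : Set X) (f : X → ℝ) : ℝ :=
  exCond D S (fun x b => f x * yv b)

/-- Unnormalized restricted true positive count `E_{(x,y)∼D}[f(x)·y·1(x ∈ S)]`. -/
def tpcIn (D : Measure (X × Bool)) (S : Set X) (f : X → ℝ) : ℝ :=
  ∫ z in S ×ˢ (univ : Set Bool), f z.1 * yv z.2 ∂D

/-- `Pr_{(x,y)∼D}[y = 1]`. -/
def prY1 (D : Measure (X × Bool)) : ℝ :=
  (D ((univ : Set X) ×ˢ ({true} : Set Bool))).toReal

/-- `Pr_{(x,y)∼D}[x ∈ A | x ∈ S]`. -/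
def prCond (D : Measure (X × Bool)) (S A : Set X) : ℝ :=
  (D ((S ∩ A) ×ˢ (univ : Set Bool))).toReal / (D (S ×ˢ (univ : Set Bool))).toReal

/-- `τ(·, i)` is a randomized threshold with threshold `t` and tie value `γ`:
it is `1` above `t`, `γ` at `t`, and `0` below `t`. -/
def IsThresholdOn {m : ℕ} (τ : ℝ → Fin m → ℝ) (i : Fin m) (t γ : ℝ) : Prop :=
  (∀ r, t < r → τ r i = 1) ∧ τ t i = γ ∧ (∀ r, r < t → τ r i = 0)

/-- A randomized group threshold function: for each group `i` there are a threshold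
`t_i ∈ [0,1]` and a tie value `γ_i ∈ [0,1]`. -/
def IsRGTF {m : ℕ} (τ : ℝ → Fin m → ℝ) : Prop :=
  ∀ i, ∃ t ∈ Icc (0:ℝ) 1, ∃ γ ∈ Icc (0:ℝ) 1, IsThresholdOn τ i t γ

/-- `D` is non-degenerate w.r.t. groups `S`, capacity `c` and class `F`: every `f ∈ F`
with `Pr[f(x)=1] ≥ 1−c` has `E[y | f(x)=1, x ∈ S i] > 0` for every group `i`. -/
def NonDegenerate {m : ℕ} (D : Measure (X × Bool)) (S : Fin m → Set X)
    (c : ℝ) (F : Set (X → ℝ)) : Prop :=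
  ∀ f ∈ F, 1 - c ≤ prIn D {x | f x = 1} →
    ∀ i, 0 < exCond D ({x | f x = 1} ∩ S i) (fun _ b => yv b)

/-- `F` is closed under group post-processing: for every `f ∈ F` and every ([0,1]-valued,
measurable in each group slot) post-processing `τ`, the function `x ↦ τ(f(x), g(x))` is
in `F`. -/
def ClosedUnderGroupPostProc {m : ℕ} (F : Set (X → ℝ)) (g : X → Fin m) : Prop :=
  ∀ f ∈ F, ∀ τ : ℝ → Fin m → ℝ, (∀ i, Measurable fun r => τ r i) →
    (∀ i r, r ∈ Icc (0:ℝ) 1 → τ r i ∈ Icc (0:ℝ) 1) →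
    (fun x => τ (f x) (g x)) ∈ F

/-- `f ∈ F` has capacity `c` and maximizes `min_i E[h(x)y | x ∈ S i]` over capacity-`c`
functions `h ∈ F`. -/
def MaxMinFair {m : ℕ} (D : Measure (X × Bool)) (S : Fin m → Set X)
    (F : Set (X → ℝ)) (c : ℝ) (f : X → ℝ) : Prop :=
  f ∈ F ∧ HasCapacity D f c ∧
    ∀ h ∈ F, HasCapacity D h c →
      (⨅ i, tpcCond D (S i) h) ≤ ⨅ i, tpcCond D (S i) f


/-! ### Auxiliary lemmas -/

lemma aux_integrable (D : Measure (X × Bool)) [IsProbabilityMeasure D]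
    (φ : X × Bool → ℝ) (hφ : Measurable φ) (C : ℝ) (hC : ∀ z, |φ z| ≤ C) :
    Integrable φ D :=
  (integrable_const C).mono' hφ.aestronglyMeasurable
    (Filter.Eventually.of_forall (by simpa [Real.norm_eq_abs] using hC))

lemma aux_yv_meas : Measurable yv := measurable_of_countable _

lemma aux_yv_nonneg (b : Bool) : 0 ≤ yv b := by cases b <;> simp [yv]

lemma aux_yv_le_one (b : Bool) : yv b ≤ 1 := by cases b <;> simp [yv]

lemma aux_setIntegral_yv (D : Measure (X × Bool)) [IsProbabilityMeasure D]
    {E : Set (X × Bool)} (hE : MeasurableSet E) :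
    ∫ z in E, yv z.2 ∂D = (D (E ∩ (univ ×ˢ ({true} : Set Bool)))).toReal := by
  have hB : MeasurableSet ((univ : Set X) ×ˢ ({true} : Set Bool)) :=
    MeasurableSet.univ.prod (measurableSet_singleton true)
  have h1 : (fun z : X × Bool => yv z.2)
      = ((univ : Set X) ×ˢ ({true} : Set Bool)).indicator (fun _ => (1:ℝ)) := by
    funext z
    rcases z with ⟨x, b⟩
    cases b <;> simp [yv, Set.indicator]
  rw [h1, setIntegral_indicator hB, setIntegral_const]
  simp
  rfl

lemma aux_g_eq {m : ℕ} {S : Fin m → Set X} (hSdisj : ∀ i j, i ≠ j → Disjoint (S i) (S j))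
    {g : X → Fin m} (hg : ∀ x, x ∈ S (g x)) {i : Fin m} {x : X} (hx : x ∈ S i) : g x = i := by
  by_contra h
  exact Set.disjoint_left.mp (hSdisj _ _ h) (hg x) hx

lemma aux_min_attained {m : ℕ} (hm : 0 < m) (v : Fin m → ℝ) :
    ∃ i, (⨅ k, v k) = v i ∧ ∀ k, v i ≤ v k := by
  haveI : Nonempty (Fin m) := ⟨⟨0, hm⟩⟩
  obtain ⟨i, hi⟩ := Finite.exists_min v
  exact ⟨i, le_antisymm (ciInf_le (Finite.bddBelow_range v) i) (le_ciInf hi), hi⟩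

set_option maxHeartbeats 2000000 in
/-- for `0 ≤ c < 1/2` and a distribution that is non-degenerate w.r.t. the
groups, capacity `2c` and a family `F` closed under group post-processing, any capacity-`c`
max-min fair `f ∈ F` has equal per-group true positive counts. -/
theorem maxMinFair_equal_group_tpc
    {X : Type*} [MeasurableSpace X] {m : ℕ} (hm : 0 < m)
    (D : Measure (X × Bool)) [IsProbabilityMeasure D]
    (S : Fin m → Set X)
    (hSdisj : ∀ i j, i ≠ j → Disjoint (S i) (S j)) (hScover : (⋃ i, S i) = univ)
    (hSmeas : ∀ i, MeasurableSet (S i))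
    (g : X → Fin m) (hg : ∀ x, x ∈ S (g x))
    (F : Set (X → ℝ))
    (hFrange : ∀ f ∈ F, ∀ x, f x ∈ Icc (0:ℝ) 1)
    (hFmeas : ∀ f ∈ F, Measurable f)
    (c : ℝ) (hc0 : 0 ≤ c) (hc : c < 1 / 2)
    (hND : NonDegenerate D S (2 * c) F)
    (hclosed : ClosedUnderGroupPostProc F g)
    (f : X → ℝ) (hf : MaxMinFair D S F c f) :
    ∀ i j, tpcCond D (S i) f = tpcCond D (S j) f := by
  classical
  obtain ⟨hfF, hfcap, hfopt⟩ := hf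
  have hfmeas := hFmeas f hfF
  have hf0 : ∀ x, 0 ≤ f x := fun x => (hFrange f hfF x).1
  have hf1 : ∀ x, f x ≤ 1 := fun x => (hFrange f hfF x).2
  have hfm1 : Measurable fun z : X × Bool => f z.1 := hfmeas.comp measurable_fst
  have hyvm : Measurable fun z : X × Bool => yv z.2 := aux_yv_meas.comp measurable_snd
  have hintf : Integrable (fun z : X × Bool => f z.1) D :=
    aux_integrable D _ hfm1 1 fun z => abs_le.mpr ⟨by linarith [hf0 z.1], hf1 z.1⟩
  have hfyvm : Measurable fun z : X × Bool => f z.1 * yv z.2 := hfm1.mul hyvm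
  have hintfy : Integrable (fun z : X × Bool => f z.1 * yv z.2) D := by
    refine aux_integrable D _ hfyvm 1 fun z => abs_le.mpr ⟨?_, ?_⟩
    · have := mul_nonneg (hf0 z.1) (aux_yv_nonneg z.2); linarith
    · exact mul_le_one₀ (hf1 z.1) (aux_yv_nonneg z.2) (aux_yv_le_one z.2)
  have hEf : ∫ z, f z.1 ∂D = c := hfcap
  have hSm : ∀ i, MeasurableSet ((S i) ×ˢ (univ : Set Bool)) :=
    fun i => (hSmeas i).prod MeasurableSet.univ
  -- nonnegativity of conditional tpc
  have hTnn : ∀ (h : X → ℝ), (∀ x, 0 ≤ h x) → ∀ i, 0 ≤ tpcCond D (S i) h := by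
    intro h hh i
    apply div_nonneg
    · exact setIntegral_nonneg (hSm i) fun z _ => mul_nonneg (hh z.1) (aux_yv_nonneg z.2)
    · exact ENNReal.toReal_nonneg
  obtain ⟨i₀, hMeq, hMmin⟩ := aux_min_attained hm (fun i => tpcCond D (S i) f)
  have hMnn : 0 ≤ tpcCond D (S i₀) f := hTnn f hf0 i₀
  -- The key claim: no group exceeds the minimum.
  have key : ∀ j, tpcCond D (S j) f ≤ tpcCond D (S i₀) f := by
    intro j
    by_contra hcon
    push_neg at hcon
    -- notation
    set M : ℝ := tpcCond D (S i₀) f with hMdef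
    set Tj : ℝ := tpcCond D (S j) f with hTjdef
    have hTjpos : 0 < Tj := lt_of_le_of_lt hMnn hcon
    -- Step 1: apply non-degeneracy to the indicator of {f < 1}
    set U : Set X := {x | f x < 1} with hU
    have hUm : MeasurableSet U := measurableSet_lt hfmeas measurable_const
    set τ0 : ℝ → Fin m → ℝ := fun r _ => if r < 1 then 1 else 0 with hτ0
    have h0F : (fun x => τ0 (f x) (g x)) ∈ F := by
      refine hclosed f hfF τ0 (fun i => ?_) (fun i r _ => ?_)
      · exact Measurable.ite (measurableSet_lt measurable_id measurable_const)
          measurable_const measurable_const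
      · by_cases h : r < 1 <;> simp [τ0, h]
    have hset : {x | (fun x => τ0 (f x) (g x)) x = 1} = U := by
      ext x
      by_cases h : f x < 1 <;> simp [τ0, h, hU]
    -- Markov: D({1 ≤ f} × univ) ≤ c
    have hA1m : MeasurableSet ({x | 1 ≤ f x} ×ˢ (univ : Set Bool)) :=
      (measurableSet_le measurable_const hfmeas).prod MeasurableSet.univ
    have hMark : (D ({x | 1 ≤ f x} ×ˢ (univ : Set Bool))).toReal ≤ c := by
      have h1 : (D ({x | 1 ≤ f x} ×ˢ (univ : Set Bool))).toReal
          = ∫ _ in {x | 1 ≤ f x} ×ˢ (univ : Set Bool), (1:ℝ) ∂D := by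
        rw [setIntegral_const]; simp; rfl
      have h2 : ∫ _ in {x | 1 ≤ f x} ×ˢ (univ : Set Bool), (1:ℝ) ∂D
          ≤ ∫ z in {x | 1 ≤ f x} ×ˢ (univ : Set Bool), f z.1 ∂D := by
        refine setIntegral_mono_on ?_ hintf.integrableOn hA1m fun z hz => hz.1
        exact (integrable_const (1:ℝ)).integrableOn
      have h3 : ∫ z in {x | 1 ≤ f x} ×ˢ (univ : Set Bool), f z.1 ∂D ≤ ∫ z, f z.1 ∂D :=
        setIntegral_le_integral hintf (Filter.Eventually.of_forall fun z => hf0 z.1)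
      linarith [hEf]
    have hcompl : U ×ˢ (univ : Set Bool) = ({x | 1 ≤ f x} ×ˢ (univ : Set Bool))ᶜ := by
      ext z
      simp [hU, Set.mem_prod, not_le]
    have hprU : 1 - 2 * c ≤ prIn D U := by
      have hadd : (D ({x | 1 ≤ f x} ×ˢ (univ : Set Bool))).toReal
          + (D (({x | 1 ≤ f x} ×ˢ (univ : Set Bool))ᶜ)).toReal = 1 := by
        rw [← ENNReal.toReal_add (measure_ne_top D _) (measure_ne_top D _),
          measure_add_measure_compl hA1m, measure_univ, ENNReal.toReal_one]
      have : prIn D U = (D (({x | 1 ≤ f x} ×ˢ (univ : Set Bool))ᶜ)).toReal := by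
        rw [prIn, hcompl]
      linarith
    -- non-degeneracy consequences
    have hND' : ∀ i, 0 < (D ((U ∩ S i) ×ˢ ({true} : Set Bool))).toReal ∧ 0 < prIn D (S i) := by
      intro i
      have h := hND _ h0F (by rw [hset]; exact hprU) i
      rw [hset] at h
      have hUSm : MeasurableSet ((U ∩ S i) ×ˢ (univ : Set Bool)) :=
        (hUm.inter (hSmeas i)).prod MeasurableSet.univ
      rcases div_pos_iff.mp h with ⟨ha, hb⟩ | ⟨_, hb⟩
      · constructor
        · rw [aux_setIntegral_yv D hUSm, Set.prod_inter_prod, Set.inter_univ,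
            Set.univ_inter] at ha
          exact ha
        · refine lt_of_lt_of_le hb ?_
          exact ENNReal.toReal_mono (measure_ne_top D _)
            (measure_mono (Set.prod_mono Set.inter_subset_right subset_rfl))
      · exact absurd hb (not_lt.mpr ENNReal.toReal_nonneg)
    -- Step 2: find δ₁ > 0 with positive mass of positives below the δ₁-slack level in each group
    have hn : ∀ i : Fin m, ∃ n : ℕ,
        0 < D (({x | f x ≤ 1 - 1 / ((n:ℝ) + 1)} ∩ S i) ×ˢ ({true} : Set Bool)) := by
      intro i
      by_contra hcon2
      push_neg at hcon2
      have hz : ∀ n : ℕ,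
          D (({x | f x ≤ 1 - 1 / ((n:ℝ) + 1)} ∩ S i) ×ˢ ({true} : Set Bool)) = 0 :=
        fun n => le_antisymm (hcon2 n) zero_le
      have hun : (U ∩ S i) ×ˢ ({true} : Set Bool)
          = ⋃ n : ℕ, ({x | f x ≤ 1 - 1 / ((n:ℝ) + 1)} ∩ S i) ×ˢ ({true} : Set Bool) := by
        ext ⟨x, b⟩
        simp only [Set.mem_prod, Set.mem_iUnion, Set.mem_inter_iff, Set.mem_setOf_eq, hU]
        constructor
        · rintro ⟨⟨hx, hxi⟩, hb⟩
          obtain ⟨n, hn'⟩ := exists_nat_one_div_lt (sub_pos.mpr hx)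
          exact ⟨n, ⟨⟨by linarith, hxi⟩, hb⟩⟩
        · rintro ⟨n, ⟨hx, hxi⟩, hb⟩
          have hq : (0:ℝ) < 1 / ((n:ℝ) + 1) := by positivity
          exact ⟨⟨by linarith, hxi⟩, hb⟩
      have hpos := (hND' i).1
      rw [hun, measure_iUnion_null hz] at hpos
      simp at hpos
    choose nn hnn using hn
    set N : ℕ := Finset.univ.sup nn with hN
    set δ1 : ℝ := 1 / ((N:ℝ) + 1) with hδ1
    have hδ1pos : 0 < δ1 := by positivity
    have hposN : ∀ i, 0 < D (({x | f x ≤ 1 - δ1} ∩ S i) ×ˢ ({true} : Set Bool)) := by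
      intro i
      refine lt_of_lt_of_le (hnn i) (measure_mono ?_)
      refine Set.prod_mono (Set.inter_subset_inter_left _ ?_) subset_rfl
      intro x hx
      simp only [Set.mem_setOf_eq] at hx ⊢
      have hle : nn i ≤ N := Finset.le_sup (Finset.mem_univ i)
      have h2 : δ1 ≤ 1 / ((nn i : ℝ) + 1) := by
        apply one_div_le_one_div_of_le (by positivity)
        exact_mod_cast by omega
      linarith
    -- Step 3: set up the perturbation parameters
    set A : ℝ := ∫ z in (S j) ×ˢ (univ : Set Bool), f z.1 ∂D with hA
    have hApos : 0 < A := by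
      have h1 : Tj * prIn D (S j) = ∫ z in (S j) ×ˢ (univ : Set Bool), f z.1 * yv z.2 ∂D := by
        rw [hTjdef]
        show (∫ z in (S j) ×ˢ (univ : Set Bool), f z.1 * yv z.2 ∂D) / prIn D (S j)
          * prIn D (S j) = _
        rw [div_mul_cancel₀]
        exact ne_of_gt (hND' j).2
      have h2 : ∫ z in (S j) ×ˢ (univ : Set Bool), f z.1 * yv z.2 ∂D ≤ A := by
        refine setIntegral_mono_on hintfy.integrableOn hintf.integrableOn (hSm j)
          fun z _ => ?_
        exact mul_le_of_le_one_right (hf0 z.1) (aux_yv_le_one z.2)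
      have h3 : 0 < Tj * prIn D (S j) := mul_pos hTjpos (hND' j).2
      linarith
    set ε0 : ℝ := (Tj - M) / Tj with hε0
    have hε0pos : 0 < ε0 := div_pos (by linarith) hTjpos
    have hε0le1 : ε0 ≤ 1 := by rw [div_le_one hTjpos]; linarith
    set δ : ℝ := min δ1 (ε0 * A / 2) with hδ
    have hδpos : 0 < δ := lt_min hδ1pos (by positivity)
    have hδle1 : δ ≤ δ1 := min_le_left _ _
    set q : X × Bool → ℝ := fun z => min (f z.1 + δ) 1 - f z.1 with hq
    have hqm : Measurable q := ((hfm1.add_const δ).min measurable_const).sub hfm1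
    have hq0 : ∀ z, 0 ≤ q z := fun z =>
      sub_nonneg.mpr (le_min (le_add_of_nonneg_right hδpos.le) (hf1 z.1))
    have hqδ : ∀ z, q z ≤ δ := by
      intro z
      have := min_le_left (f z.1 + δ) 1
      simp only [hq]
      linarith
    have hintq : Integrable q D :=
      aux_integrable D _ hqm δ fun z => abs_le.mpr ⟨by linarith [hq0 z], hqδ z⟩
    have hqyvm : Measurable fun z : X × Bool => q z * yv z.2 := hqm.mul hyvm
    have hintqy : Integrable (fun z : X × Bool => q z * yv z.2) D := by
      refine aux_integrable D _ hqyvm δ fun z => abs_le.mpr ⟨?_, ?_⟩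
      · have := mul_nonneg (hq0 z) (aux_yv_nonneg z.2); linarith [hδpos]
      · calc q z * yv z.2 ≤ q z * 1 :=
              mul_le_mul_of_nonneg_left (aux_yv_le_one z.2) (hq0 z)
          _ = q z := mul_one _
          _ ≤ δ := hqδ z
    set B : ℝ := ∫ z in (S j)ᶜ ×ˢ (univ : Set Bool), q z ∂D with hB
    have hSjcm : MeasurableSet ((S j)ᶜ ×ˢ (univ : Set Bool)) :=
      (hSmeas j).compl.prod MeasurableSet.univ
    have hB0 : 0 ≤ B := setIntegral_nonneg hSjcm fun z _ => hq0 z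
    have hBδ : B ≤ δ := by
      have h1 : B ≤ ∫ _ in (S j)ᶜ ×ˢ (univ : Set Bool), δ ∂D :=
        setIntegral_mono_on hintq.integrableOn (integrable_const δ).integrableOn hSjcm
          fun z _ => hqδ z
      have h2 : ∫ _ in (S j)ᶜ ×ˢ (univ : Set Bool), δ ∂D
          = (D ((S j)ᶜ ×ˢ (univ : Set Bool))).toReal * δ := by
        rw [setIntegral_const, smul_eq_mul]
        rfl
      have h3 : (D ((S j)ᶜ ×ˢ (univ : Set Bool))).toReal ≤ 1 := by
        have := ENNReal.toReal_mono (measure_ne_top D univ)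
          (measure_mono (Set.subset_univ ((S j)ᶜ ×ˢ (univ : Set Bool))))
        simpa using this
      nlinarith [ENNReal.toReal_nonneg (a := D ((S j)ᶜ ×ˢ (univ : Set Bool)))]
    set ε : ℝ := B / A with hε
    have hεnn : 0 ≤ ε := div_nonneg hB0 hApos.le
    have hεlt : ε < ε0 := by
      rw [hε, div_lt_iff₀ hApos]
      have h1 : δ ≤ ε0 * A / 2 := min_le_right _ _
      nlinarith
    have hεle1 : ε ≤ 1 := hεlt.le.trans hε0le1
    have hεA : ε * A = B := div_mul_cancel₀ B (ne_of_gt hApos)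
    -- Step 4: the perturbed function
    set τ : ℝ → Fin m → ℝ := fun r i => if i = j then (1 - ε) * r else min (r + δ) 1 with hτ
    have hτmeas : ∀ i, Measurable fun r => τ r i := by
      intro i
      by_cases h : i = j
      · simp only [hτ, h, if_true]
        exact measurable_id.const_mul _
      · simp only [hτ, h, if_false]
        exact (measurable_id.add_const δ).min measurable_const
    have hτrange : ∀ i r, r ∈ Icc (0:ℝ) 1 → τ r i ∈ Icc (0:ℝ) 1 := by
      intro i r hr
      by_cases h : i = j
      · simp only [hτ, h, if_true]
        exact ⟨mul_nonneg (by linarith) hr.1, mul_le_one₀ (by linarith) hr.1 hr.2⟩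
      · simp only [hτ, h, if_false]
        exact ⟨le_min (by linarith [hr.1, hδpos]) zero_le_one, min_le_right _ _⟩
    have hhF : (fun x => τ (f x) (g x)) ∈ F := hclosed f hfF τ hτmeas hτrange
    have hhmeas : Measurable fun x => τ (f x) (g x) := hFmeas _ hhF
    have hhr := hFrange _ hhF
    have hhm1 : Measurable fun z : X × Bool => τ (f z.1) (g z.1) := hhmeas.comp measurable_fst
    have hinth : Integrable (fun z : X × Bool => τ (f z.1) (g z.1)) D :=
      aux_integrable D _ hhm1 1 fun z =>
        abs_le.mpr ⟨by linarith [(hhr z.1).1], (hhr z.1).2⟩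
    have hgj : ∀ z : X × Bool, z ∈ (S j) ×ˢ (univ : Set Bool) →
        τ (f z.1) (g z.1) = (1 - ε) * f z.1 := by
      intro z hz
      simp only [hτ]
      rw [if_pos (aux_g_eq hSdisj hg hz.1)]
    have hgnj : ∀ z : X × Bool, z ∈ (S j)ᶜ ×ˢ (univ : Set Bool) →
        τ (f z.1) (g z.1) = min (f z.1 + δ) 1 := by
      intro z hz
      have hne : g z.1 ≠ j := fun h => hz.1 (h ▸ hg z.1)
      simp only [hτ]
      rw [if_neg hne]
    have hcomple : ((S j) ×ˢ (univ : Set Bool))ᶜ = (S j)ᶜ ×ˢ (univ : Set Bool) := by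
      ext z
      simp [Set.mem_prod]
    -- capacity of the perturbed function
    have hcaph : HasCapacity D (fun x => τ (f x) (g x)) c := by
      show ∫ z, τ (f z.1) (g z.1) ∂D = c
      rw [← integral_add_compl (hSm j) hinth]
      have e1 : ∫ z in (S j) ×ˢ (univ : Set Bool), τ (f z.1) (g z.1) ∂D = (1 - ε) * A := by
        rw [setIntegral_congr_fun (hSm j) hgj, hA, ← integral_const_mul]
      have e2 : ∫ z in ((S j) ×ˢ (univ : Set Bool))ᶜ, τ (f z.1) (g z.1) ∂D
          = (∫ z in (S j)ᶜ ×ˢ (univ : Set Bool), f z.1 ∂D) + B := by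
        rw [hcomple, setIntegral_congr_fun hSjcm hgnj]
        have hfe : ∀ z : X × Bool, min (f z.1 + δ) 1 = f z.1 + q z := by
          intro z; simp only [hq]; ring
        rw [show (fun z : X × Bool => min (f z.1 + δ) 1) = fun z => f z.1 + q z from
          funext hfe]
        rw [integral_add hintf.integrableOn hintq.integrableOn]
      have e3 : A + ∫ z in (S j)ᶜ ×ˢ (univ : Set Bool), f z.1 ∂D = c := by
        rw [← hEf, ← integral_add_compl (hSm j) hintf, hcomple]
      rw [e1, e2]
      linarith [hεA, e3]
    -- per-group tpc of the perturbed function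
    have hTj' : tpcCond D (S j) (fun x => τ (f x) (g x)) = (1 - ε) * Tj := by
      show (∫ z in (S j) ×ˢ (univ : Set Bool), τ (f z.1) (g z.1) * yv z.2 ∂D)
          / prIn D (S j) = _
      have hcong : ∀ z ∈ (S j) ×ˢ (univ : Set Bool),
          τ (f z.1) (g z.1) * yv z.2 = (1 - ε) * (f z.1 * yv z.2) := by
        intro z hz
        rw [hgj z hz]; ring
      rw [setIntegral_congr_fun (hSm j) hcong, integral_const_mul, mul_div_assoc]
      rfl
    have hMj : M < tpcCond D (S j) (fun x => τ (f x) (g x)) := by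
      rw [hTj']
      have h1 : (1 - ε0) * Tj = M := by
        rw [hε0, sub_mul, div_mul_cancel₀ _ hTjpos.ne']; ring
      nlinarith [hεlt, hTjpos]
    have hMi : ∀ i, i ≠ j → M < tpcCond D (S i) (fun x => τ (f x) (g x)) := by
      intro i hij
      have hcong : ∀ z ∈ (S i) ×ˢ (univ : Set Bool),
          τ (f z.1) (g z.1) * yv z.2 = f z.1 * yv z.2 + q z * yv z.2 := by
        intro z hz
        have hgz : g z.1 = i := aux_g_eq hSdisj hg hz.1
        simp only [hτ]
        rw [if_neg (by rw [hgz]; exact hij), hq]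
        ring
      have hnum : ∫ z in (S i) ×ˢ (univ : Set Bool), τ (f z.1) (g z.1) * yv z.2 ∂D
          = (∫ z in (S i) ×ˢ (univ : Set Bool), f z.1 * yv z.2 ∂D)
            + ∫ z in (S i) ×ˢ (univ : Set Bool), q z * yv z.2 ∂D := by
        rw [setIntegral_congr_fun (hSm i) hcong,
          integral_add hintfy.integrableOn hintqy.integrableOn]
      set V : Set (X × Bool) := ({x | f x ≤ 1 - δ} ∩ S i) ×ˢ ({true} : Set Bool) with hV
      have hVm : MeasurableSet V :=
        ((measurableSet_le hfmeas measurable_const).inter (hSmeas i)).prod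
          (measurableSet_singleton true)
      have hVsub : V ⊆ (S i) ×ˢ (univ : Set Bool) :=
        Set.prod_mono Set.inter_subset_right (Set.subset_univ _)
      have hVpos : 0 < (D V).toReal := by
        refine ENNReal.toReal_pos (ne_of_gt ?_) (measure_ne_top D V)
        refine lt_of_lt_of_le (hposN i) (measure_mono ?_)
        refine Set.prod_mono (Set.inter_subset_inter_left _ ?_) subset_rfl
        intro x hx
        simp only [Set.mem_setOf_eq] at hx ⊢
        linarith
      have hgain : δ * (D V).toReal
          ≤ ∫ z in (S i) ×ˢ (univ : Set Bool), q z * yv z.2 ∂D := by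
        have hind : ∀ z ∈ (S i) ×ˢ (univ : Set Bool),
            V.indicator (fun _ => δ) z ≤ q z * yv z.2 := by
          intro z hz
          by_cases hzV : z ∈ V
          · rw [Set.indicator_of_mem hzV]
            obtain ⟨⟨hzf, _⟩, hzt⟩ := hzV
            have h1 : min (f z.1 + δ) 1 = f z.1 + δ := min_eq_left (by
              simp only [Set.mem_setOf_eq] at hzf; linarith)
            have h2 : yv z.2 = 1 := by
              have : z.2 = true := hzt
              simp [yv, this]
            simp only [hq, h1, h2]
            ring_nf
            exact le_refl _
          · rw [Set.indicator_of_notMem hzV]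
            exact mul_nonneg (hq0 z) (aux_yv_nonneg z.2)
        have heq : ∫ z in (S i) ×ˢ (univ : Set Bool), V.indicator (fun _ => δ) z ∂D
            = δ * (D V).toReal := by
          rw [setIntegral_indicator hVm, Set.inter_eq_self_of_subset_right hVsub,
            setIntegral_const, smul_eq_mul, mul_comm]
          rfl
        rw [← heq]
        refine setIntegral_mono_on ?_ hintqy.integrableOn (hSm i) hind
        refine Integrable.integrableOn ?_
        refine aux_integrable D _ ((measurable_const (a := δ)).indicator hVm) δ fun z => ?_
        by_cases hzV : z ∈ V
        · rw [Set.indicator_of_mem hzV, abs_of_nonneg hδpos.le]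
        · rw [Set.indicator_of_notMem hzV]; simp [hδpos.le]
      have hTi : tpcCond D (S i) (fun x => τ (f x) (g x))
          = ((∫ z in (S i) ×ˢ (univ : Set Bool), f z.1 * yv z.2 ∂D)
            + ∫ z in (S i) ×ˢ (univ : Set Bool), q z * yv z.2 ∂D) / prIn D (S i) := by
        show (∫ z in (S i) ×ˢ (univ : Set Bool), τ (f z.1) (g z.1) * yv z.2 ∂D)
            / prIn D (S i) = _
        rw [hnum]
      rw [hTi, add_div]
      have hTif : tpcCond D (S i) f
          = (∫ z in (S i) ×ˢ (univ : Set Bool), f z.1 * yv z.2 ∂D) / prIn D (S i) := rfl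
      have hMle : M ≤ tpcCond D (S i) f := hMmin i
      have hGpos : 0 < (∫ z in (S i) ×ˢ (univ : Set Bool), q z * yv z.2 ∂D)
          / prIn D (S i) :=
        div_pos (lt_of_lt_of_le (mul_pos hδpos hVpos) hgain) (hND' i).2
      rw [hTif] at hMle
      linarith
    -- all groups strictly exceed M, contradiction with optimality
    have hall : ∀ i, M < tpcCond D (S i) (fun x => τ (f x) (g x)) := by
      intro i
      by_cases h : i = j
      · rw [h]; exact hMj
      · exact hMi i h
    obtain ⟨i₁, hEq1, _⟩ := aux_min_attained hm (fun i => tpcCond D (S i) (fun x => τ (f x) (g x)))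
    have h1 : M < ⨅ i, tpcCond D (S i) (fun x => τ (f x) (g x)) := by
      rw [hEq1]; exact hall i₁
    have h2 := hfopt _ hhF hcaph
    rw [hMeq] at h2
    linarith
  intro i j
  have h1 : tpcCond D (S i) f = tpcCond D (S i₀) f := le_antisymm (key i) (hMmin i)
  have h2 : tpcCond D (S j) f = tpcCond D (S i₀) f := le_antisymm (key j) (hMmin j)
  rw [h1, h2]


end FairAlloc

end
end

section
/- For any distribution D over X × {0,1}, any partition of X into groups S = {S_1,...,S_m}, and any function f : X → [0,1] with E_{(x,y)∼D}[f(x)y] > 0 and E_{(x,y)∼D}[f(x)y | x ∈ S_i] > 0 for all i, the normalized proportional fairness objective decomposes as Prop_{D,S}(f) = −D_KL(Q_S, Q_f) + log E_{(x,y)∼D}[f(x)y], where D_KL is the Kullback–Leibler divergence between the probability distributions Q_S and Q_f on [m]. -/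
open MeasureTheory Set

noncomputable section

namespace FairAlloc

variable {X : Type*} [MeasurableSpace X]

/-- Kullback–Leibler divergence between two distributions on `Fin m`. -/
def dKL {m : ℕ} (P Q : Fin m → ℝ) : ℝ :=
  ∑ i, P i * Real.log (P i / Q i)

/-- The distribution `Q_S` on the groups: `Q_S(i) = Pr[x ∈ S i]`. -/
def QS {m : ℕ} (D : Measure (X × Bool)) (S : Fin m → Set X) : Fin m → ℝ :=
  fun i => prIn D (S i)

/-- The distribution `Q_f` on the groups: `Q_f(i) = E[f(x)y·1(x ∈ S i)] / E[f(x)y]`. -/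
def Qf {m : ℕ} (D : Measure (X × Bool)) (S : Fin m → Set X) (f : X → ℝ) : Fin m → ℝ :=
  fun i => tpcIn D (S i) f / tpc D f

/-- the normalized proportional fairness objective decomposes as
`Prop_{D,S}(f) = −D_KL(Q_S, Q_f) + log E[f(x)y]`. -/
theorem normProp_eq_neg_dKL_add_log_tpc
    {X : Type*} [MeasurableSpace X] {m : ℕ}
    (D : Measure (X × Bool)) [IsProbabilityMeasure D]
    (S : Fin m → Set X)
    (hSdisj : ∀ i j, i ≠ j → Disjoint (S i) (S j)) (hScover : (⋃ i, S i) = univ)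
    (hSmeas : ∀ i, MeasurableSet (S i))
    (f : X → ℝ) (hfrange : ∀ x, f x ∈ Icc (0:ℝ) 1) (hfmeas : Measurable f)
    (hpos : 0 < tpc D f) (hposI : ∀ i, 0 < tpcCond D (S i) f) :
    ∑ i, prIn D (S i) * Real.log (tpcCond D (S i) f)
      = -dKL (QS D S) (Qf D S f) + Real.log (tpc D f) := by

  -- basic positivity facts
  have hprIn_nonneg : ∀ i, 0 ≤ prIn D (S i) := fun i => ENNReal.toReal_nonneg
  have hprIn_pos : ∀ i, 0 < prIn D (S i) := by
    intro i
    rcases lt_or_eq_of_le (hprIn_nonneg i) with h | h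
    · exact h
    · exfalso
      have := hposI i
      rw [tpcCond, exCond, ← h.symm] at this
      simp at this
      exact absurd this (by rw [← h]; simp [div_zero])
  have htpcIn_pos : ∀ i, 0 < tpcIn D (S i) f := by
    intro i
    have h1 : tpcCond D (S i) f = tpcIn D (S i) f / prIn D (S i) := rfl
    have := hposI i
    rw [h1] at this
    have := mul_pos this (hprIn_pos i)
    rwa [div_mul_cancel₀ _ (ne_of_gt (hprIn_pos i))] at this
  have hsum : ∑ i, prIn D (S i) = 1 := by
    have hmeas : ∀ i, MeasurableSet ((S i) ×ˢ (univ : Set Bool)) :=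
      fun i => (hSmeas i).prod MeasurableSet.univ
    have hdisj : Pairwise (Function.onFun Disjoint (fun i => (S i) ×ˢ (univ : Set Bool))) := by
      intro i j hij
      exact Set.disjoint_prod.2 (Or.inl (hSdisj i j hij))
    have hU : (⋃ i, (S i) ×ˢ (univ : Set Bool)) = (univ : Set (X × Bool)) := by
      rw [← Set.iUnion_prod_const, hScover, Set.univ_prod_univ]
    have h1 : ∑ i, D ((S i) ×ˢ (univ : Set Bool)) = 1 := by
      rw [← tsum_fintype (L := .unconditional _), ← measure_iUnion hdisj hmeas, hU, measure_univ]
    have h2 : ∑ i, prIn D (S i) = (∑ i, D ((S i) ×ˢ (univ : Set Bool))).toReal := by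
      rw [ENNReal.toReal_sum]
      · rfl
      · intro i _; exact measure_ne_top D _
    rw [h2, h1, ENNReal.toReal_one]
  have key : ∀ i, prIn D (S i) * Real.log (tpcCond D (S i) f)
      = -(QS D S i * Real.log (QS D S i / Qf D S f i))
        + prIn D (S i) * Real.log (tpc D f) := by
    intro i
    have hpi := hprIn_pos i
    have hti := htpcIn_pos i
    have h1 : tpcCond D (S i) f = tpcIn D (S i) f / prIn D (S i) := rfl
    have h2 : QS D S i = prIn D (S i) := rfl
    have h3 : Qf D S f i = tpcIn D (S i) f / tpc D f := rfl
    rw [h1, h2, h3, Real.log_div (ne_of_gt hti) (ne_of_gt hpi),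
      div_div_eq_mul_div, Real.log_div (by positivity) (ne_of_gt hti),
      Real.log_mul (ne_of_gt hpi) (ne_of_gt hpos)]
    ring
  calc ∑ i, prIn D (S i) * Real.log (tpcCond D (S i) f)
      = ∑ i, (-(QS D S i * Real.log (QS D S i / Qf D S f i))
        + prIn D (S i) * Real.log (tpc D f)) := Finset.sum_congr rfl (fun i _ => key i)
    _ = -dKL (QS D S) (Qf D S f) + (∑ i, prIn D (S i)) * Real.log (tpc D f) := by
        rw [Finset.sum_add_distrib, Finset.sum_neg_distrib, ← Finset.sum_mul]; rfl
    _ = -dKL (QS D S) (Qf D S f) + Real.log (tpc D f) := by rw [hsum, one_mul]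


end FairAlloc

end
end

section
/- Let D be a distribution over X × {0,1} with X partitioned into two groups S_1, S_2, and let p : X → [0,1] be a predictor such that S_1 is t_0-tail dominant over S_2. Let τ : [0,1] × [2] → [0,1] be a randomized group threshold function with thresholds t_1, t_2 ≥ t_0 and let t_min = min{t_1, t_2} > 0. If E_{x∼D}[τ(p(x),1)·p(x) | x ∈ S_1] ≤ E_{x∼D}[τ(p(x),2)·p(x) | x ∈ S_2] + α, then E_{x∼D}[τ(p(x),1) | x ∈ S_1] ≤ E_{x∼D}[τ(p(x),2) | x ∈ S_2] + α/t_min. -/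
open MeasureTheory Set

noncomputable section

namespace FairAlloc

variable {X : Type*} [MeasurableSpace X]

/-- `S1` has `t0`-tail dominance over `S2` under `D` and predictor `p`:
for all `r ≥ t0`, `Pr[p(x) > r | x ∈ S1] ≥ Pr[p(x) > r | x ∈ S2]`. -/
def TailDom (D : Measure (X × Bool)) (p : X → ℝ) (S1 S2 : Set X) (t0 : ℝ) : Prop :=
  ∀ r, t0 ≤ r → prCond D S2 {x | r < p x} ≤ prCond D S1 {x | r < p x}

/-- Conditional true positive count of an allocation `f` on the simulated distribution
`D_p` (under which `y | x ∼ Bernoulli(p(x))`): `E_{D_p}[f(x)y | x ∈ S] = E_x[f(x)p(x) | x ∈ S]`. -/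
def tpcSimCond (D : Measure (X × Bool)) (p : X → ℝ) (S : Set X) (f : X → ℝ) : ℝ :=
  exCond D S (fun x _ => f x * p x)

/-- Total true positive count of an allocation `f` on the simulated distribution `D_p`:
`E_{D_p}[f(x)y] = E_x[f(x)p(x)]`. -/
def simTPC (D : Measure (X × Bool)) (p : X → ℝ) (f : X → ℝ) : ℝ :=
  ex D (fun x _ => f x * p x)

/-- The allocation `x ↦ τ(p(x), g(x))` has capacity `c` and satisfies max-min fairness on
the simulated distribution `D_p` over randomized group threshold post-processings of `p`
of capacity `c`. -/
def MaxMinFairSim2 (D : Measure (X × Bool)) (p : X → ℝ) (g : X → Fin 2)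
    (S1 S2 : Set X) (c : ℝ) (τ : ℝ → Fin 2 → ℝ) : Prop :=
  IsRGTF τ ∧ HasCapacity D (fun x => τ (p x) (g x)) c ∧
    ∀ τ' : ℝ → Fin 2 → ℝ, IsRGTF τ' → HasCapacity D (fun x => τ' (p x) (g x)) c →
      min (tpcSimCond D p S1 fun x => τ' (p x) (g x))
          (tpcSimCond D p S2 fun x => τ' (p x) (g x))
        ≤ min (tpcSimCond D p S1 fun x => τ (p x) (g x))
            (tpcSimCond D p S2 fun x => τ (p x) (g x))

/-- The simulated distribution `D_p` is non-degenerate at capacity `c` w.r.t. the class of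
randomized group threshold post-processings of `p`: whenever such an allocation is `1` on
a set of probability at least `1−c`, `E_{D_p}[y | alloc = 1, x ∈ S_i] = E_x[p(x) | alloc = 1, x ∈ S_i] > 0`. -/
def SimNonDeg2 (D : Measure (X × Bool)) (p : X → ℝ) (g : X → Fin 2)
    (S1 S2 : Set X) (c : ℝ) : Prop :=
  ∀ τ' : ℝ → Fin 2 → ℝ, IsRGTF τ' → 1 - c ≤ prIn D {x | τ' (p x) (g x) = 1} →
    0 < exCond D ({x | τ' (p x) (g x) = 1} ∩ S1) (fun x _ => p x) ∧
    0 < exCond D ({x | τ' (p x) (g x) = 1} ∩ S2) (fun x _ => p x)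

/-- Calibration error of `p` on a group `S`: `∫_0^1 |E[(y−r)·1(p(x)=r) | x ∈ S]| dr`. -/
def calErr (D : Measure (X × Bool)) (S : Set X) (p : X → ℝ) : ℝ :=
  ∫ r in (0:ℝ)..1, |exCond D S (fun x b => if p x = r then yv b - r else 0)|

section Aux

/-- Bounded measurable functions of `x` are integrable w.r.t. a probability measure on
`X × Bool` (composed with the first projection). -/
lemma integrable_comp_fst {X : Type*} [MeasurableSpace X]
    (D : Measure (X × Bool)) [IsProbabilityMeasure D]
    (f : X → ℝ) (hf : Measurable f) (C : ℝ) (hC : ∀ x, |f x| ≤ C) :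
    Integrable (fun z : X × Bool => f z.1) D := by
  refine ⟨(hf.comp measurable_fst).aestronglyMeasurable, ?_⟩
  exact MeasureTheory.HasFiniteIntegral.of_bounded (C := C)
    (Filter.Eventually.of_forall fun z => by simpa using hC z.1)

/-- Key tail-dominance comparison lemma: the conditional expectation of
`max (p x - t1) 0` over the dominated group `S2` is at most the one over `S1`. -/
lemma tail_aux {X : Type*} [MeasurableSpace X]
    (D : Measure (X × Bool)) [IsProbabilityMeasure D]
    (S1 S2 : Set X) (hS1meas : MeasurableSet S1) (hS2meas : MeasurableSet S2)
    (hpr1 : 0 < prIn D S1) (hpr2 : 0 < prIn D S2)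
    (p : X → ℝ) (hp : Measurable p) (hprange : ∀ x, p x ∈ Icc (0:ℝ) 1)
    (t0 t1 : ℝ) (ht01 : t0 ≤ t1) (ht1nn : 0 ≤ t1)
    (htd : TailDom D p S1 S2 t0) :
    exCond D S2 (fun x _ => max (p x - t1) 0) ≤ exCond D S1 (fun x _ => max (p x - t1) 0) := by
  classical
  -- the layer-cake representation on each group
  have layer : ∀ (S : Set X), MeasurableSet S →
      exCond D S (fun x _ => max (p x - t1) 0)
        = ∫ t in Ioi (0:ℝ), prCond D S {x | t1 + t < p x} := by
    intro S hS
    have hmeas : Measurable (fun z : X × Bool => max (p z.1 - t1) 0) :=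
      ((hp.comp measurable_fst).sub measurable_const).max measurable_const
    have hint : Integrable (fun z : X × Bool => max (p z.1 - t1) 0)
        (D.restrict (S ×ˢ (univ : Set Bool))) := by
      refine Integrable.restrict ?_
      refine integrable_comp_fst D _ ((hp.sub measurable_const).max measurable_const) 1 ?_
      intro x
      show |max (p x - t1) 0| ≤ 1
      have h1 := (hprange x).1
      have h2 := (hprange x).2
      rw [abs_le]
      refine ⟨by have : (0:ℝ) ≤ max (p x - t1) 0 := le_max_right _ _; linarith, ?_⟩
      exact max_le (by linarith) (by norm_num)
    have hnn : 0 ≤ᵐ[D.restrict (S ×ˢ (univ : Set Bool))]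
        fun z : X × Bool => max (p z.1 - t1) 0 :=
      Filter.Eventually.of_forall fun z => le_max_right _ _
    have key := Integrable.integral_eq_integral_meas_lt hint hnn
    have hset : ∀ t : ℝ, 0 < t →
        (D.restrict (S ×ˢ (univ : Set Bool))) {a : X × Bool | t < max (p a.1 - t1) 0}
          = D ((S ∩ {x | t1 + t < p x}) ×ˢ (univ : Set Bool)) := by
      intro t ht
      rw [Measure.restrict_apply (by
        exact measurableSet_lt measurable_const hmeas)]
      congr 1
      ext z
      simp only [Set.mem_inter_iff, Set.mem_setOf_eq, Set.mem_prod, Set.mem_univ, and_true]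
      constructor
      · rintro ⟨hz, hzS⟩
        rcases lt_max_iff.mp hz with h | h
        · exact ⟨hzS, by linarith⟩
        · linarith
      · rintro ⟨hzS, hz⟩
        exact ⟨lt_max_iff.mpr (Or.inl (by linarith)), hzS⟩
    rw [exCond, key, prIn, ← integral_div]
    refine setIntegral_congr_fun measurableSet_Ioi fun t ht => ?_
    rw [measureReal_def, hset t (mem_Ioi.mp ht), prCond]
  rw [layer S1 hS1meas, layer S2 hS2meas]
  -- vanishing of the integrands past 1
  have hvanish : ∀ (S : Set X), EqOn (fun t => prCond D S {x | t1 + t < p x}) 0 (Ioi (1:ℝ)) := by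
    intro S t ht
    have hempty : {x | t1 + t < p x} = (∅ : Set X) := by
      ext x
      simp only [Set.mem_setOf_eq, Set.mem_empty_iff_false, iff_false, not_lt]
      have := (hprange x).2
      have := mem_Ioi.mp ht
      linarith
    simp [prCond, hempty]
  have hintegrand : ∀ (S : Set X), 0 < prIn D S →
      IntegrableOn (fun t => prCond D S {x | t1 + t < p x}) (Ioi (0:ℝ)) := by
    intro S hSpr
    have hanti : Antitone fun t : ℝ =>
        (D ((S ∩ {x | t1 + t < p x}) ×ˢ (univ : Set Bool))).toReal := by
      intro s t hst
      have : ((S ∩ {x | t1 + t < p x}) ×ˢ (univ : Set Bool))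
          ⊆ ((S ∩ {x | t1 + s < p x}) ×ˢ (univ : Set Bool)) := by
        refine Set.prod_mono_left (Set.inter_subset_inter_right _ ?_)
        intro x hx
        simp only [Set.mem_setOf_eq] at hx ⊢
        linarith
      exact ENNReal.toReal_mono (measure_ne_top D _) (measure_mono this)
    have hmbl : Measurable fun t : ℝ => prCond D S {x | t1 + t < p x} := by
      unfold prCond
      exact (hanti.measurable).div_const _
    have hbd : ∀ t : ℝ, ‖prCond D S {x | t1 + t < p x}‖ ≤ 1 / prIn D S := by
      intro t
      rw [Real.norm_eq_abs, prCond, abs_div, abs_of_nonneg ENNReal.toReal_nonneg,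
        abs_of_nonneg ENNReal.toReal_nonneg]
      have hnum : (D ((S ∩ {x | t1 + t < p x}) ×ˢ (univ : Set Bool))).toReal ≤ 1 := by
        have h := ENNReal.toReal_mono (measure_ne_top D univ)
          (measure_mono (subset_univ ((S ∩ {x | t1 + t < p x}) ×ˢ (univ : Set Bool))))
        simpa using h
      exact div_le_div_of_nonneg_right hnum ENNReal.toReal_nonneg
    have hIoc : IntegrableOn (fun t => prCond D S {x | t1 + t < p x}) (Ioc (0:ℝ) 1) := by
      refine Measure.integrableOn_of_bounded (M := 1 / prIn D S) measure_Ioc_lt_top.ne hmbl.aestronglyMeasurable ?_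
      exact Filter.Eventually.of_forall hbd
    have hIoi1 : IntegrableOn (fun t => prCond D S {x | t1 + t < p x}) (Ioi (1:ℝ)) :=
      (integrableOn_congr_fun (hvanish S) measurableSet_Ioi).mpr
        (integrableOn_zero (s := Ioi (1:ℝ)))
    have : Ioi (0:ℝ) ⊆ Ioc 0 1 ∪ Ioi 1 := by
      intro t ht
      rcases le_or_gt t 1 with h | h
      · exact Or.inl ⟨mem_Ioi.mp ht, h⟩
      · exact Or.inr h
    exact (hIoc.union hIoi1).mono_set this
  refine integral_mono_of_nonneg ?_ (hintegrand S1 hpr1) ?_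
  · refine Filter.Eventually.of_forall fun t => ?_
    exact div_nonneg ENNReal.toReal_nonneg ENNReal.toReal_nonneg
  · refine (ae_restrict_iff' measurableSet_Ioi).mpr
      (Filter.Eventually.of_forall fun t ht => ?_)
    exact htd (t1 + t) (by have := mem_Ioi.mp ht; linarith)

end Aux

/-- with `t0`-tail dominance of `S1` over `S2`, for any randomized group
threshold function `τ` with thresholds `t1, t2 ≥ t0` and `min{t1,t2} > 0`, if
`E[τ(p,1)p | S1] ≤ E[τ(p,2)p | S2] + α` then
`E[τ(p,1) | S1] ≤ E[τ(p,2) | S2] + α / min{t1,t2}`. -/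
theorem tail_dominance_threshold_transfer
    {X : Type*} [MeasurableSpace X]
    (D : Measure (X × Bool)) [IsProbabilityMeasure D]
    (S1 S2 : Set X) (hS1meas : MeasurableSet S1) (hS2meas : MeasurableSet S2)
    (hdisj : Disjoint S1 S2) (hcover : S1 ∪ S2 = univ)
    (hpr1 : 0 < prIn D S1) (hpr2 : 0 < prIn D S2)
    (p : X → ℝ) (hp : Measurable p) (hprange : ∀ x, p x ∈ Icc (0:ℝ) 1)
    (t0 : ℝ) (htd : TailDom D p S1 S2 t0)
    (τ : ℝ → Fin 2 → ℝ) (t1 t2 γ1 γ2 : ℝ)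
    (ht1 : t0 ≤ t1) (ht2 : t0 ≤ t2)
    (ht1' : t1 ∈ Icc (0:ℝ) 1) (ht2' : t2 ∈ Icc (0:ℝ) 1)
    (hγ1 : γ1 ∈ Icc (0:ℝ) 1) (hγ2 : γ2 ∈ Icc (0:ℝ) 1)
    (hth1 : IsThresholdOn τ 0 t1 γ1) (hth2 : IsThresholdOn τ 1 t2 γ2)
    (htmin : 0 < min t1 t2)
    (α : ℝ) (hα : 0 ≤ α)
    (hineq : exCond D S1 (fun x _ => τ (p x) 0 * p x)
      ≤ exCond D S2 (fun x _ => τ (p x) 1 * p x) + α) :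
    exCond D S1 (fun x _ => τ (p x) 0)
      ≤ exCond D S2 (fun x _ => τ (p x) 1) + α / min t1 t2 := by
  classical
  obtain ⟨hth1a, hth1b, hth1c⟩ := hth1
  obtain ⟨hth2a, hth2b, hth2c⟩ := hth2
  have ht1pos : 0 < t1 := lt_of_lt_of_le htmin (min_le_left _ _)
  -- bounds on τ ∘ p
  have hbd1 : ∀ x, 0 ≤ τ (p x) 0 ∧ τ (p x) 0 ≤ 1 := by
    intro x
    rcases lt_trichotomy (p x) t1 with h | h | h
    · rw [hth1c _ h]; norm_num
    · rw [h, hth1b]; exact ⟨hγ1.1, hγ1.2⟩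
    · rw [hth1a _ h]; norm_num
  have hbd2 : ∀ x, 0 ≤ τ (p x) 1 ∧ τ (p x) 1 ≤ 1 := by
    intro x
    rcases lt_trichotomy (p x) t2 with h | h | h
    · rw [hth2c _ h]; norm_num
    · rw [h, hth2b]; exact ⟨hγ2.1, hγ2.2⟩
    · rw [hth2a _ h]; norm_num
  -- measurability of τ ∘ p
  have hτm1 : Measurable fun x => τ (p x) 0 := by
    have heq : (fun x => τ (p x) 0)
        = fun x => if t1 < p x then (1:ℝ) else if p x = t1 then γ1 else 0 := by
      funext x
      rcases lt_trichotomy (p x) t1 with h | h | h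
      · rw [hth1c _ h, if_neg (not_lt.mpr h.le), if_neg h.ne]
      · rw [h, hth1b, if_neg (lt_irrefl _), if_pos rfl]
      · rw [hth1a _ h, if_pos h]
    rw [heq]
    exact Measurable.ite (measurableSet_lt measurable_const hp) measurable_const
      (Measurable.ite (hp (measurableSet_singleton t1)) measurable_const measurable_const)
  have hτm2 : Measurable fun x => τ (p x) 1 := by
    have heq : (fun x => τ (p x) 1)
        = fun x => if t2 < p x then (1:ℝ) else if p x = t2 then γ2 else 0 := by
      funext x
      rcases lt_trichotomy (p x) t2 with h | h | h
      · rw [hth2c _ h, if_neg (not_lt.mpr h.le), if_neg h.ne]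
      · rw [h, hth2b, if_neg (lt_irrefl _), if_pos rfl]
      · rw [hth2a _ h, if_pos h]
    rw [heq]
    exact Measurable.ite (measurableSet_lt measurable_const hp) measurable_const
      (Measurable.ite (hp (measurableSet_singleton t2)) measurable_const measurable_const)
  have hmaxm : Measurable fun x => max (p x - t1) 0 :=
    (hp.sub measurable_const).max measurable_const
  -- monotonicity of exCond
  have hmono : ∀ (S : Set X) (f g : X → ℝ), Measurable f → Measurable g →
      (∀ x, |f x| ≤ 2) → (∀ x, |g x| ≤ 2) → (∀ x, f x ≤ g x) → 0 < prIn D S →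
      exCond D S (fun x _ => f x) ≤ exCond D S (fun x _ => g x) := by
    intro S f g hf hg hfb hgb hle hSpr
    unfold exCond
    have hnum : (∫ z in S ×ˢ (univ : Set Bool), f z.1 ∂D)
        ≤ ∫ z in S ×ˢ (univ : Set Bool), g z.1 ∂D :=
      setIntegral_mono ((integrable_comp_fst D f hf 2 hfb).restrict)
        ((integrable_comp_fst D g hg 2 hgb).restrict) (fun z => hle z.1)
    exact div_le_div_of_nonneg_right hnum hSpr.le
  -- splitting of exCond on a sum
  have hsplit : ∀ (S : Set X) (i : Fin 2),
      exCond D S (fun x _ => t1 * τ (p x) i + max (p x - t1) 0)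
        = t1 * exCond D S (fun x _ => τ (p x) i)
          + exCond D S (fun x _ => max (p x - t1) 0) := by
    intro S i
    have hτm : Measurable fun x => τ (p x) i := by
      fin_cases i
      · exact hτm1
      · exact hτm2
    have hτb : ∀ x, |τ (p x) i| ≤ 2 := by
      intro x
      have h01 : 0 ≤ τ (p x) i ∧ τ (p x) i ≤ 1 := by
        fin_cases i
        · exact hbd1 x
        · exact hbd2 x
      rw [abs_le]; constructor <;> linarith [h01.1, h01.2]
    have hint1 : Integrable (fun z : X × Bool => t1 * τ (p z.1) i)
        (D.restrict (S ×ˢ (univ : Set Bool))) := by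
      refine Integrable.restrict ?_
      exact (integrable_comp_fst D _ hτm 2 hτb).const_mul t1
    have hint2 : Integrable (fun z : X × Bool => max (p z.1 - t1) 0)
        (D.restrict (S ×ˢ (univ : Set Bool))) := by
      refine Integrable.restrict (integrable_comp_fst D _ hmaxm 2 ?_)
      intro x
      have h1 := (hprange x).1
      have h2 := (hprange x).2
      rw [abs_le]
      constructor
      · have : (0:ℝ) ≤ max (p x - t1) 0 := le_max_right _ _
        linarith
      · exact max_le (by linarith) (by norm_num)
    unfold exCond
    rw [integral_add hint1 hint2, integral_const_mul, add_div, mul_div_assoc]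
  -- pointwise inequalities
  have hptA : ∀ x, τ (p x) 1 * p x ≤ t1 * τ (p x) 1 + max (p x - t1) 0 := by
    intro x
    have h01 := hbd2 x
    have : τ (p x) 1 * (p x - t1) ≤ max (p x - t1) 0 := by
      rcases le_or_gt t1 (p x) with h | h
      · calc τ (p x) 1 * (p x - t1) ≤ 1 * (p x - t1) := by
              apply mul_le_mul_of_nonneg_right h01.2 (by linarith)
          _ = p x - t1 := one_mul _
          _ ≤ max (p x - t1) 0 := le_max_left _ _
      · have : τ (p x) 1 * (p x - t1) ≤ 0 :=
          mul_nonpos_of_nonneg_of_nonpos h01.1 (by linarith)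
        exact this.trans (le_max_right _ _)
    nlinarith [this]
  have hptB : ∀ x, t1 * τ (p x) 0 + max (p x - t1) 0 ≤ τ (p x) 0 * p x := by
    intro x
    rcases lt_trichotomy (p x) t1 with h | h | h
    · rw [hth1c _ h, max_eq_right (by linarith)]
      norm_num
    · rw [h, hth1b, max_eq_right (by linarith)]
      ring_nf
      exact le_refl _
    · rw [hth1a _ h, max_eq_left (by linarith)]
      ring_nf
      norm_num
  -- boundedness for hmono
  have hb1 : ∀ x, |τ (p x) 0 * p x| ≤ 2 := by
    intro x
    have h01 := hbd1 x
    have hr := hprange x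
    rw [abs_le]
    constructor
    · nlinarith [h01.1, h01.2, hr.1, hr.2]
    · nlinarith [h01.1, h01.2, hr.1, hr.2]
  have hb2 : ∀ x, |τ (p x) 1 * p x| ≤ 2 := by
    intro x
    have h01 := hbd2 x
    have hr := hprange x
    rw [abs_le]
    constructor
    · nlinarith [h01.1, h01.2, hr.1, hr.2]
    · nlinarith [h01.1, h01.2, hr.1, hr.2]
  have hbc1 : ∀ x, |t1 * τ (p x) 0 + max (p x - t1) 0| ≤ 2 := by
    intro x
    have h01 := hbd1 x
    have hr := hprange x
    have hm1 : (0:ℝ) ≤ max (p x - t1) 0 := le_max_right _ _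
    have hm2 : max (p x - t1) 0 ≤ 1 := max_le (by linarith [hr.2, ht1'.1]) (by norm_num)
    rw [abs_le]
    constructor
    · nlinarith [h01.1, h01.2, ht1'.1, ht1'.2]
    · nlinarith [h01.1, h01.2, ht1'.1, ht1'.2]
  have hbc2 : ∀ x, |t1 * τ (p x) 1 + max (p x - t1) 0| ≤ 2 := by
    intro x
    have h01 := hbd2 x
    have hr := hprange x
    have hm1 : (0:ℝ) ≤ max (p x - t1) 0 := le_max_right _ _
    have hm2 : max (p x - t1) 0 ≤ 1 := max_le (by linarith [hr.2, ht1'.1]) (by norm_num)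
    rw [abs_le]
    constructor
    · nlinarith [h01.1, h01.2, ht1'.1, ht1'.2]
    · nlinarith [h01.1, h01.2, ht1'.1, ht1'.2]
  -- the three key exCond inequalities
  have step1 : t1 * exCond D S1 (fun x _ => τ (p x) 0)
      + exCond D S1 (fun x _ => max (p x - t1) 0)
      ≤ exCond D S1 (fun x _ => τ (p x) 0 * p x) := by
    rw [← hsplit S1 0]
    exact hmono S1 _ _ ((hτm1.const_mul t1).add hmaxm) (hτm1.mul hp) hbc1 hb1 hptB hpr1
  have step2 : exCond D S2 (fun x _ => τ (p x) 1 * p x)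
      ≤ t1 * exCond D S2 (fun x _ => τ (p x) 1)
        + exCond D S2 (fun x _ => max (p x - t1) 0) := by
    rw [← hsplit S2 1]
    exact hmono S2 _ _ (hτm2.mul hp) ((hτm2.const_mul t1).add hmaxm) hb2 hbc2 hptA hpr2
  have step3 : exCond D S2 (fun x _ => max (p x - t1) 0)
      ≤ exCond D S1 (fun x _ => max (p x - t1) 0) :=
    tail_aux D S1 S2 hS1meas hS2meas hpr1 hpr2 p hp hprange t0 t1 ht1 ht1'.1 htd
  -- combine
  have hkey : t1 * exCond D S1 (fun x _ => τ (p x) 0)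
      ≤ t1 * exCond D S2 (fun x _ => τ (p x) 1) + α := by linarith
  have hdiv : exCond D S1 (fun x _ => τ (p x) 0)
      - exCond D S2 (fun x _ => τ (p x) 1) ≤ α / t1 := by
    rw [le_div_iff₀ ht1pos]
    nlinarith
  have hαdiv : α / t1 ≤ α / min t1 t2 :=
    div_le_div_of_nonneg_left hα htmin (min_le_left t1 t2)
  linarith


end FairAlloc

end
end

section
/- The factor 1/m in the price of achievable equal opportunity is tight in the following sense. Let X be partitioned into m equal-probability groups S_1,...,S_m, fix a capacity c ≤ 1/m, a constant δ < 1/m, and an integer k < 1/(mδc). Let p : X → [0,1] be the predictor with p(x) = kδ for x ∈ S_1 and p(x) = δ for x ∈ S_i with i > 1, and consider the simulated distribution where y ∼ Bernoulli(p(x)) (so A(c,S_1) = kδmc and A(c,S_i) = δmc for i > 1, where the maximization defining A is over all functions X → [0,1] of per-group capacity mc). Then: the capacity-c function h maximizing the true positive count without fairness constraints (h = cm on S_1 and 0 elsewhere) achieves E[h(x)y] = ckδ, while any capacity-c function f satisfying the achievable equal opportunity constraint has E[f(x)y] = (1/m)kδc + ((m−1)/m)δc ≤ δc(k/m + 1);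 hence as k → ∞ the ratio E[f(x)y]/E[h(x)y] tends to 1/m. -/
open MeasureTheory Set

noncomputable section

namespace AchievableEOTight

/-- tightness of the factor `1/m` for achievable equal opportunity.
`X` is partitioned into `m` equal-probability groups; on the simulated distribution of the
predictor `p` (with `p = kδ` on `S 0` and `p = δ` on the other groups, so that the
achievable true positive counts are `A(c, S 0) = kδmc` and `A(c, S i) = δmc` for `i ≠ 0`),
the unconstrained capacity-`c` maximizer `h = mc·1(S 0)` of the true positive count
attains `E[h(x)y] = ckδ`, while every capacity-`c` function satisfying the achievable
equal opportunity constraint attains exactly `(1/m)kδc + ((m−1)/m)δc ≤ δc(k/m + 1)`;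
hence the ratio is `1/m + (m−1)/(mk)`, which tends to `1/m` as `k` grows. -/
theorem achievable_eo_factor_tight
    {X : Type*} [MeasurableSpace X] {m : ℕ} [NeZero m]
    (μ : Measure X) [IsProbabilityMeasure μ]
    (S : Fin m → Set X)
    (hSdisj : ∀ i j, i ≠ j → Disjoint (S i) (S j)) (hScover : (⋃ i, S i) = univ)
    (hSmeas : ∀ i, MeasurableSet (S i))
    (heqsize : ∀ i, (μ (S i)).toReal = 1 / m)
    (c δ : ℝ) (k : ℕ)
    (hc : 0 < c) (hcm : c ≤ 1 / m)
    (hδ : 0 < δ) (hδm : δ < 1 / m)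
    (hk : 0 < k) (hkb : (k : ℝ) < 1 / (m * δ * c)) (hkδ : (k : ℝ) * δ ≤ 1)
    (p : X → ℝ)
    (hp0 : ∀ x ∈ S 0, p x = k * δ)
    (hpi : ∀ i, i ≠ 0 → ∀ x ∈ S i, p x = δ)
    -- the achievable true positive counts of the groups with capacity `c`
    (A : Fin m → ℝ) (hA0 : A 0 = k * δ * m * c)
    (hAi : ∀ i, i ≠ 0 → A i = δ * m * c)
    -- the unconstrained maximizer: `h = mc` on `S 0`, `0` elsewhere
    (h : X → ℝ) (hh : h = (S 0).indicator fun _ => c * m) :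
    ((∫ x, h x ∂μ) = c ∧ (∫ x, h x * p x ∂μ) = c * k * δ) ∧
    (∀ f : X → ℝ, Measurable f → (∀ x, f x ∈ Icc (0:ℝ) 1) →
      (∫ x, f x ∂μ) = c →
      -- achievable equal opportunity w.r.t. the achievable counts `A`
      (∀ i j, ((∫ x in S i, f x * p x ∂μ) / (μ (S i)).toReal) / A i
        = ((∫ x in S j, f x * p x ∂μ) / (μ (S j)).toReal) / A j) →
      (∫ x, f x * p x ∂μ) = (1 / m) * k * δ * c + ((m - 1 : ℝ) / m) * δ * c ∧
      (∫ x, f x * p x ∂μ) ≤ δ * c * ((k : ℝ) / m + 1) ∧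
      (∫ x, f x * p x ∂μ) / (c * k * δ) = 1 / m + ((m - 1 : ℝ)) / (m * k)) := by
  classical
  have hm0 : (m:ℝ) ≠ 0 := Nat.cast_ne_zero.mpr (NeZero.ne m)
  have hm1 : (1:ℝ) ≤ m := by exact_mod_cast Nat.one_le_iff_ne_zero.mpr (NeZero.ne m)
  have hmpos : (0:ℝ) < m := by linarith
  have hk0 : (k:ℝ) ≠ 0 := Nat.cast_ne_zero.mpr hk.ne'
  have hkpos : (0:ℝ) < k := by positivity
  have hδ1 : δ ≤ 1 := le_of_lt (lt_of_lt_of_le hδm (by rw [div_le_one hmpos]; exact hm1))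
  -- p is measurable (it equals an if-then-else over `S 0`)
  have hpeq : p = fun x => if x ∈ S 0 then (k:ℝ) * δ else δ := by
    funext x
    by_cases hx : x ∈ S 0
    · simp [hx, hp0 x hx]
    · have hxU : x ∈ ⋃ i, S i := by rw [hScover]; trivial
      obtain ⟨i, hi⟩ := mem_iUnion.mp hxU
      have hine : i ≠ 0 := fun hzero => hx (hzero ▸ hi)
      simp [hx, hpi i hine x hi]
  have hpmeas : Measurable p := by
    rw [hpeq]
    exact Measurable.ite (hSmeas 0) measurable_const measurable_const
  have hpbound : ∀ x, |p x| ≤ 1 := by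
    intro x
    rw [hpeq]
    by_cases hx : x ∈ S 0
    · simp only [hx, if_true]
      rw [abs_le]; constructor <;> nlinarith
    · simp only [hx, if_false]
      rw [abs_le]; constructor <;> nlinarith
  constructor
  · constructor
    · rw [hh, integral_indicator (hSmeas 0), setIntegral_const, measureReal_def, heqsize, smul_eq_mul]
      field_simp
    · have heq : (fun x => h x * p x) = (S 0).indicator (fun _ => c * m * ((k:ℝ) * δ)) := by
        funext x
        by_cases hx : x ∈ S 0
        · simp [hh, indicator_of_mem hx, hp0 x hx]
        · simp [hh, indicator_of_notMem hx]
      rw [heq, integral_indicator (hSmeas 0), setIntegral_const, measureReal_def, heqsize, smul_eq_mul]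
      field_simp
  · intro f hfm hf01 hcap hEO
    -- integrability
    have hIntf : Integrable f μ := by
      refine (integrable_const (1:ℝ)).mono' hfm.aestronglyMeasurable (ae_of_all _ fun x => ?_)
      have h1 := hf01 x
      rw [Real.norm_eq_abs, abs_le]
      exact ⟨by linarith [h1.1], by simpa using h1.2⟩
    have hIntfp : Integrable (fun x => f x * p x) μ := by
      refine (integrable_const (1:ℝ)).mono' (hfm.mul hpmeas).aestronglyMeasurable
        (ae_of_all _ fun x => ?_)
      have h1 := hf01 x
      have h2 := hpbound x
      rw [Real.norm_eq_abs, abs_mul]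
      calc |f x| * |p x| ≤ 1 * 1 := by
            apply mul_le_mul _ h2 (abs_nonneg _) zero_le_one
            rw [abs_le]; exact ⟨by linarith [h1.1], h1.2⟩
        _ = 1 := by ring
    -- partition sum
    have hsum : ∀ g : X → ℝ, Integrable g μ →
        (∫ x, g x ∂μ) = ∑ i, ∫ x in S i, g x ∂μ := by
      intro g hg
      rw [← setIntegral_univ, ← hScover,
        integral_iUnion hSmeas (fun i j hij => hSdisj i j hij)
          (hg.integrableOn), tsum_fintype]
    have hT0 : (∫ x in S 0, f x * p x ∂μ) = (k:ℝ) * δ * ∫ x in S 0, f x ∂μ := by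
      have heq : (∫ x in S 0, f x * p x ∂μ) = ∫ x in S 0, f x * ((k:ℝ) * δ) ∂μ :=
        setIntegral_congr_fun (hSmeas 0) (fun x hx => by rw [hp0 x hx])
      rw [heq, integral_mul_const]; ring
    have hTi : ∀ i, i ≠ 0 → (∫ x in S i, f x * p x ∂μ) = δ * ∫ x in S i, f x ∂μ := by
      intro i hine
      have heq : (∫ x in S i, f x * p x ∂μ) = ∫ x in S i, f x * δ ∂μ :=
        setIntegral_congr_fun (hSmeas i) (fun x hx => by rw [hpi i hine x hx])
      rw [heq, integral_mul_const]; ring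
    -- EO implies all group masses equal
    have hFeq : ∀ i, (∫ x in S i, f x ∂μ) = ∫ x in S 0, f x ∂μ := by
      intro i
      by_cases hi : i = 0
      · rw [hi]
      · have hEq := hEO i 0
        rw [heqsize, heqsize, hA0, hAi i hi, hT0, hTi i hi] at hEq
        have lhs : δ * (∫ x in S i, f x ∂μ) / (1 / (m:ℝ)) / (δ * m * c)
            = (∫ x in S i, f x ∂μ) / c := by field_simp
        have rhs : (k:ℝ) * δ * (∫ x in S 0, f x ∂μ) / (1 / (m:ℝ)) / ((k:ℝ) * δ * m * c)
            = (∫ x in S 0, f x ∂μ) / c := by field_simp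
        rw [lhs, rhs] at hEq
        rw [div_eq_div_iff hc.ne' hc.ne'] at hEq
        exact mul_right_cancel₀ hc.ne' hEq
    have hFsum : (∑ i, ∫ x in S i, f x ∂μ) = c := by rw [← hsum f hIntf]; exact hcap
    have hF0 : (∫ x in S 0, f x ∂μ) = c / m := by
      have hs : (∑ i : Fin m, ∫ x in S i, f x ∂μ) = (m:ℝ) * ∫ x in S 0, f x ∂μ := by
        rw [Finset.sum_congr rfl (fun i _ => hFeq i)]
        simp [Finset.card_univ, mul_comm]
      rw [hs] at hFsum
      field_simp
      linarith
    have hTval : ∀ i : Fin m, (∫ x in S i, f x * p x ∂μ)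
        = (if i = 0 then (k:ℝ) * δ else δ) * (c / m) := by
      intro i
      by_cases hi : i = 0
      · rw [hi, hT0, hF0]; simp
      · rw [hTi i hi, hFeq i, hF0]; simp [hi]
    have hmain : (∫ x, f x * p x ∂μ) = (k:ℝ) * δ * (c / m) + ((m:ℝ) - 1) * (δ * (c / m)) := by
      rw [hsum _ hIntfp]
      calc (∑ i, ∫ x in S i, f x * p x ∂μ)
          = ∑ i : Fin m, ((if i = 0 then (k:ℝ) * δ else δ) * (c / m)) :=
            Finset.sum_congr rfl (fun i _ => hTval i)
        _ = ∑ i : Fin m, (δ * (c / m) + if i = 0 then (k:ℝ) * δ * (c/m) - δ * (c/m) else 0) := by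
            apply Finset.sum_congr rfl
            intro i _
            by_cases hi : i = 0 <;> simp [hi] <;> ring
        _ = (m:ℝ) * (δ * (c / m)) + ((k:ℝ) * δ * (c/m) - δ * (c/m)) := by
            rw [Finset.sum_add_distrib, Finset.sum_const, Finset.card_univ,
              Finset.sum_ite_eq' Finset.univ (0 : Fin m)]
            simp [nsmul_eq_mul]
        _ = (k:ℝ) * δ * (c / m) + ((m:ℝ) - 1) * (δ * (c / m)) := by ring
    refine ⟨?_, ?_, ?_⟩
    · rw [hmain]; field_simp
    · rw [hmain]
      have hpos : 0 < δ * (c / m) := by positivity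
      have h1 : ((m:ℝ) - 1) * (δ * (c / m)) ≤ (m:ℝ) * (δ * (c / m)) := by nlinarith
      have h2 : (m:ℝ) * (δ * (c / m)) = δ * c := by field_simp
      have hrw : δ * c * ((k:ℝ) / m + 1) = (k:ℝ) * δ * (c / m) + δ * c := by
        field_simp
      linarith
    · rw [hmain]
      field_simp

end AchievableEOTight

end
end
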